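/- arXiv:2111.04697 — 2 statements merged into one kernel-verified Lean document; each statement's English description precedes it below -/
import Mathlib

section
/- Let k be a field, m ≥ 2, d divisible by m, and q a prime dividing m with char(k) not dividing q. If f(x,z) ∈ k[x,z] is homogeneous of degree d and f = g^q for some homogeneous degree d/q polynomial g ∈ k̄[x,z] over the algebraic closure, then there exist a ∈ k and a homogeneous degree d/q polynomial h(x,z) ∈ k[x,z] with f = a·h^q. -/
/-!
Dehomogenizing `x ↦ X, z ↦ 1` reduces the problem to one variable. There, if `F = G ^ q` over
`L` and `b` is the leading coefficient of `G`, then `P = G / b` is monic with `P ^ q` defined over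
`K`, and such a `P` is itself defined over `K`. Indeed, write `P = A + B` with `A` monic and defined
over `K` and `deg B = j < deg A = n`. The coefficient of `X ^ ((q - 1) n + j)` in
`(A + B) ^ q - A ^ q` is `q` times the leading coefficient of `B`, so that coefficient lies in `K`,
because `q` is invertible in `K`. Moving the leading term of `B` into `A` and descending on
`deg B` finishes the proof.
-/

open MvPolynomial
open scoped Polynomial

namespace Polynomial

theorem coeff_add_pow_sub_pow {R : Type*} [CommRing R] {A B : R[X]} (hA : A.Monic)
    (hB : B.degree < A.degree) (q : ℕ) :
    ((A + B) ^ q - A ^ q).coeff ((q - 1) * A.natDegree + B.natDegree) = q * B.leadingCoeff := by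
  set n := A.natDegree
  have hAB : (A + B).Monic := hA.add_of_left hB
  have hnAB : (A + B).natDegree = n := natDegree_add_eq_left_of_degree_lt hB
  -- `(A + B) ^ q - A ^ q = S * B`, and `S` is a sum of `q` monic polynomials of degree `(q - 1) n`
  set S := ∑ i ∈ Finset.range q, (A + B) ^ i * A ^ (q - 1 - i)
  have hterm : ∀ i ∈ Finset.range q,
      ((A + B) ^ i * A ^ (q - 1 - i)).natDegree ≤ (q - 1) * n ∧
      ((A + B) ^ i * A ^ (q - 1 - i)).coeff ((q - 1) * n) = 1 := by
    intro i hi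
    have hdeg : (q - 1) * n = i * n + (q - 1 - i) * n := by
      rw [← add_mul]; congr; have := Finset.mem_range.mp hi; omega
    have hi : ((A + B) ^ i).natDegree ≤ i * n := natDegree_pow_le_of_le _ hnAB.le
    have hi' : (A ^ (q - 1 - i)).natDegree ≤ (q - 1 - i) * n := natDegree_pow_le_of_le _ le_rfl
    refine ⟨hdeg ▸ natDegree_mul_le_of_le hi hi', ?_⟩
    rw [hdeg, coeff_mul_add_eq_of_natDegree_le hi hi', coeff_pow_of_natDegree_le hnAB.le,
      coeff_pow_of_natDegree_le le_rfl, ← hnAB, hAB.coeff_natDegree, hA.coeff_natDegree]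
    simp
  have hS : S.natDegree ≤ (q - 1) * n :=
    natDegree_sum_le_of_forall_le _ _ fun i hi => (hterm i hi).1
  have hSc : S.coeff ((q - 1) * n) = q := by
    rw [finsetSum_coeff, Finset.sum_congr rfl fun i hi => (hterm i hi).2]; simp
  rw [← geom_sum₂_mul, add_sub_cancel_left, coeff_mul_add_eq_of_natDegree_le hS le_rfl, hSc]
  rfl

section Lifts

variable {K L : Type*} [Field K]

theorem mem_lifts_of_add_pow_mem_lifts [CommRing L] (φ : K →+* L) {q : ℕ} (hq : (q : K) ≠ 0)
    {A B : L[X]} (hA : A.Monic) (hAφ : A ∈ lifts φ) (hB : B.degree < A.degree)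
    (hABq : (A + B) ^ q ∈ lifts φ) : B ∈ lifts φ := by
  induction hj : B.natDegree using Nat.strong_induction_on generalizing A B with
  | _ j ih =>
  by_cases hB0 : B = 0
  · rw [hB0]; exact zero_mem _
  set b := B.leadingCoeff
  have hb : b ∈ Set.range φ := by
    have hdiff : (A + B) ^ q - A ^ q ∈ lifts φ := by
      rw [lifts_iff_liftsRing] at *; exact sub_mem hABq (pow_mem hAφ q)
    obtain ⟨c, hc⟩ := (lifts_iff_coeff_lifts _).mp hdiff ((q - 1) * A.natDegree + B.natDegree)
    refine ⟨(q : K)⁻¹ * c, ?_⟩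
    rw [map_mul, hc, coeff_add_pow_sub_pow hA hB, ← mul_assoc, ← map_natCast φ, ← map_mul,
      inv_mul_cancel₀ hq, map_one, one_mul]
  have hjA : (monomial j b).degree < A.degree :=
    (degree_monomial_le j b).trans_lt (hj ▸ (degree_eq_natDegree hB0).symm ▸ hB)
  have hA' : (A + monomial j b).Monic := hA.add_of_left hjA
  have hsum : A + monomial j b + B.eraseLead = A + B := by
    rw [add_assoc, add_comm (monomial j b), ← hj, eraseLead_add_monomial_natDegree_leadingCoeff]
  have hB' : B.eraseLead ∈ lifts φ := by
    rcases eraseLead_natDegree_lt_or_eraseLead_eq_zero B with hlt | h0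
    · refine ih _ (hj ▸ hlt) hA' (add_mem hAφ (monomial_mem_lifts j hb)) ?_ (hsum ▸ hABq) rfl
      rw [degree_add_eq_left_of_degree_lt hjA]
      exact (degree_eraseLead_lt hB0).trans hB
    · rw [h0]; exact zero_mem _
  rw [← eraseLead_add_monomial_natDegree_leadingCoeff B, hj]
  exact add_mem hB' (monomial_mem_lifts j hb)

theorem Monic.mem_lifts_of_pow_mem_lifts [CommRing L] [Nontrivial L] (φ : K →+* L) {q : ℕ}
    (hq : (q : K) ≠ 0) {P : L[X]} (hP : P.Monic) (hPq : P ^ q ∈ lifts φ) : P ∈ lifts φ := by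
  have hsplit : X ^ P.natDegree + P.eraseLead = P := by
    rw [add_comm, X_pow_eq_monomial, ← hP.leadingCoeff,
      eraseLead_add_monomial_natDegree_leadingCoeff]
  have hdeg : P.eraseLead.degree < (X ^ P.natDegree : L[X]).degree := by
    rw [degree_X_pow, ← degree_eq_natDegree hP.ne_zero]; exact degree_eraseLead_lt hP.ne_zero
  rw [← hsplit] at hPq ⊢
  exact add_mem (X_pow_mem_lifts φ _)
    (mem_lifts_of_add_pow_mem_lifts φ hq (monic_X_pow _) (X_pow_mem_lifts φ _) hdeg hPq)

theorem exists_eq_C_mul_pow_of_map_eq_pow [Field L] (φ : K →+* L) {q : ℕ} (hq : (q : K) ≠ 0)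
    {F : K[X]} {G : L[X]} (hFG : F.map φ = G ^ q) :
    ∃ (a : K) (H : K[X]), H.natDegree = G.natDegree ∧ F = C a * H ^ q := by
  by_cases hG : G = 0
  · have hq0 : q ≠ 0 := by rintro rfl; simp at hq
    refine ⟨0, 0, by simp [hG], map_injective φ φ.injective ?_⟩
    simp [hFG, hG, hq0]
  set b := G.leadingCoeff
  have hb : b ≠ 0 := leadingCoeff_ne_zero.mpr hG
  have hP : (C b⁻¹ * G).Monic := monic_C_mul_of_mul_leadingCoeff_eq_one (inv_mul_cancel₀ hb)
  have hbq : φ F.leadingCoeff = b ^ q := by rw [← leadingCoeff_map, hFG, leadingCoeff_pow]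
  have hPq : (C b⁻¹ * G) ^ q ∈ lifts φ := by
    have : (C b⁻¹ * G) ^ q = C (φ F.leadingCoeff⁻¹) * F.map φ := by
      rw [mul_pow, hFG, ← C_pow, inv_pow, map_inv₀ φ, hbq]
    rw [this]; exact base_mul_mem_lifts _ ((mem_lifts _).mpr ⟨F, rfl⟩)
  obtain ⟨H, hH, hHdeg, -⟩ :=
    lifts_and_natDegree_eq_and_monic (hP.mem_lifts_of_pow_mem_lifts φ hq hPq) hP
  refine ⟨F.leadingCoeff, H, by rw [hHdeg, natDegree_C_mul (inv_ne_zero hb)],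
    map_injective φ φ.injective ?_⟩
  rw [Polynomial.map_mul, map_C, Polynomial.map_pow, hH, hFG, hbq, mul_pow, ← mul_assoc,
    ← C_pow, ← C_mul, ← mul_pow, mul_inv_cancel₀ hb, one_pow, C_1, one_mul]

end Lifts

variable {R : Type*}

theorem homogenize_pow [CommSemiring R] {P : R[X]} {n : ℕ} (hP : P.natDegree ≤ n) (q : ℕ) :
    homogenize (P ^ q) (q * n) = homogenize P n ^ q := by
  simpa using homogenize_finsetProd (s := Finset.range q) (fun _ _ => hP)

theorem homogenize_injective [CommRing R] {P Q : R[X]} {n : ℕ} (hP : P.natDegree ≤ n)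
    (hQ : Q.natDegree ≤ n) (h : homogenize P n = homogenize Q n) : P = Q :=
  sub_eq_zero.mp <| eq_zero_of_homogenize_eq_zero ((natDegree_sub_le _ _).trans (max_le hP hQ))
    (by rw [homogenize_sub, h, sub_self])

end Polynomial

namespace MvPolynomial.IsHomogeneous

section Dehomogenize

variable {R : Type*} [CommSemiring R] {p : MvPolynomial (Fin 2) R} {n : ℕ}

theorem natDegree_aeval_X_one_le (hp : p.IsHomogeneous n) :
    (MvPolynomial.aeval ![(Polynomial.X : R[X]), 1] p).natDegree ≤ n := by
  rw [p.as_sum, map_sum]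
  refine Polynomial.natDegree_sum_le_of_forall_le _ _ fun μ hμ => ?_
  have hμn : μ 0 + μ 1 = n := by
    simpa [Finsupp.weight_apply, Finsupp.sum_fintype, Fin.sum_univ_two] using
      hp (mem_support_iff.mp hμ)
  rw [aeval_monomial, Finsupp.prod_fintype _ _ (by simp), Fin.prod_univ_two]
  simp only [Fin.isValue, Matrix.cons_val_zero, Matrix.cons_val_one, one_pow, mul_one]
  exact (Polynomial.natDegree_mul_le_of_le (Polynomial.natDegree_C _).le
    (Polynomial.natDegree_X_pow_le _)).trans (by omega)

theorem homogenize_aeval_X_one (hp : p.IsHomogeneous n) :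
    (MvPolynomial.aeval ![(Polynomial.X : R[X]), 1] p).homogenize n = p :=
  Polynomial.homogenize_eq_of_isHomogeneous hp rfl

end Dehomogenize

theorem exists_eq_C_mul_pow_of_map_eq_pow {K L : Type*} [Field K] [Field L] (φ : K →+* L)
    {q n : ℕ} (hq : (q : K) ≠ 0) {f : MvPolynomial (Fin 2) K} {g : MvPolynomial (Fin 2) L}
    (hg : g.IsHomogeneous n) (hfg : MvPolynomial.map φ f = g ^ q) :
    ∃ (a : K) (h : MvPolynomial (Fin 2) K), h.IsHomogeneous n ∧ f = C a * h ^ q := by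
  have hf : f.IsHomogeneous (q * n) :=
    IsHomogeneous.of_map φ.injective (hfg ▸ mul_comm n q ▸ hg.pow q)
  set F := MvPolynomial.aeval ![(Polynomial.X : K[X]), 1] f with hFdef
  set G := MvPolynomial.aeval ![(Polynomial.X : L[X]), 1] g
  have hFG : F.map φ = G ^ q := by
    refine Polynomial.homogenize_injective
      (Polynomial.natDegree_map_le.trans hf.natDegree_aeval_X_one_le)
      (Polynomial.natDegree_pow_le_of_le q hg.natDegree_aeval_X_one_le) ?_
    rw [Polynomial.homogenize_map, hf.homogenize_aeval_X_one, hfg,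
      Polynomial.homogenize_pow hg.natDegree_aeval_X_one_le, hg.homogenize_aeval_X_one]
  obtain ⟨a, H, hH, hF⟩ := Polynomial.exists_eq_C_mul_pow_of_map_eq_pow φ hq hFG
  refine ⟨a, H.homogenize n, Polynomial.isHomogeneous_homogenize H, ?_⟩
  rw [← hf.homogenize_aeval_X_one, ← hFdef, hF, Polynomial.homogenize_C_mul,
    Polynomial.homogenize_pow (hH.trans_le hg.natDegree_aeval_X_one_le)]

end MvPolynomial.IsHomogeneous

theorem mth_power_descent_general (k : Type*) [Field k] (d q : ℕ) (hchar : ¬ (ringChar k ∣ q))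
    (f : MvPolynomial (Fin 2) k)
    (g : MvPolynomial (Fin 2) (AlgebraicClosure k))
    (hg : g.IsHomogeneous (d / q))
    (hfg : MvPolynomial.map (algebraMap k (AlgebraicClosure k)) f = g ^ q) :
    ∃ (a : k) (h : MvPolynomial (Fin 2) k),
      h.IsHomogeneous (d / q) ∧ f = C a * h ^ q :=
  hg.exists_eq_C_mul_pow_of_map_eq_pow _ (mt (ringChar.spec k q).mp hchar) hfg

/-- If `f ∈ k[x,z]` is homogeneous of degree `d`, `q` a prime dividing `m`, `m ∣ d`,
`char k ∤ q`, and `f = g^q` over the algebraic closure, then `f = a ⬝ h^q` over `k`. -/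
theorem mth_power_descent (k : Type*) [Field k] (m d q : ℕ) (hm : 2 ≤ m) (hmd : m ∣ d)
    (hq : q.Prime) (hqm : q ∣ m) (hchar : ¬ (ringChar k ∣ q))
    (f : MvPolynomial (Fin 2) k) (hf : f.IsHomogeneous d)
    (g : MvPolynomial (Fin 2) (AlgebraicClosure k))
    (hg : g.IsHomogeneous (d / q))
    (hfg : MvPolynomial.map (algebraMap k (AlgebraicClosure k)) f = g ^ q) :
    ∃ (a : k) (h : MvPolynomial (Fin 2) k),
      h.IsHomogeneous (d / q) ∧ f = C a * h ^ q :=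
  mth_power_descent_general k d q hchar f g hg hfg
end

section
/- Let p be a prime, m ≥ 2 with p ∤ m, d ≥ 1, and let Φ(p) = #((F_p^×)^m)/p be the proportion of elements of F_p that are nonzero m-th powers. The proportion of coefficient vectors (c_0,…,c_d) ∈ F_p^{d+1} such that the corresponding binary form f(x,z) takes at least one value in (F_p^×)^m at some point of P¹(F_p) is at least 1 − (1 − Φ(p))^r, where r = min(p+1, d+1). -/
/-!
Evaluating a binary form of degree `d` at `r ≤ d + 1` distinct points of `P¹(F_p)` is a surjective
additive map `F_p^{d+1} → F_p^r`: at affine points this is Lagrange interpolation, and at `[1 : 0]`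
the value is the leading coefficient `c_d`, which can be fixed independently once at most `d`
affine nodes remain. All fibres of a surjective homomorphism have the same size, so the forms
avoiding a set `S` of values at all `r` points are exactly the proportion `(1 - #S/p)^r`. Taking
`r = min(p + 1, d + 1)` points gives the bound.
-/

open Finset Polynomial

theorem AddMonoidHom.card_filter_apply_mem_mul_card {G H : Type*} [AddGroup G] [Fintype G]
    [AddGroup H] [Fintype H] [DecidableEq H] (f : G →+ H) (hf : Function.Surjective f)
    (T : Finset H) :
    #{g | f g ∈ T} * Fintype.card H = #T * Fintype.card G := by
  have hfiber (t : H) : #{g | f g = t} = #{g | f g = 0} :=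
    card_fiber_eq_of_mem_range f (hf t) (hf 0)
  have hG : Fintype.card G = Fintype.card H * #{g | f g = 0} := by
    rw [← card_univ, card_eq_sum_card_fiberwise (t := univ) (f := f) (fun _ _ => mem_univ _),
      sum_congr rfl fun t _ => hfiber t, sum_const, card_univ, smul_eq_mul]
  rw [← sum_card_fiberwise_eq_card_filter, sum_congr rfl fun t _ => hfiber t, sum_const,
    smul_eq_mul, hG]
  ring

section BinaryForm

variable {K : Type*} {d : ℕ}

/-- `some a` is the point `[a : 1]` of `P¹(K)` and `none` is `[1 : 0]`. -/
def binaryFormEval [Semiring K] (c : Fin (d + 1) → K) : Option K → K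
  | some a => ∑ i, c i * a ^ (i : ℕ)
  | none => c (Fin.last d)

theorem binaryFormEval_add [Semiring K] (c c' : Fin (d + 1) → K) (P : Option K) :
    binaryFormEval (c + c') P = binaryFormEval c P + binaryFormEval c' P := by
  cases P <;> simp [binaryFormEval, add_mul, sum_add_distrib]

theorem binaryFormEval_coeff_some [Semiring K] {Q : K[X]} (hQ : Q.natDegree ≤ d) (a : K) :
    binaryFormEval (fun i : Fin (d + 1) => Q.coeff i) (some a) = Q.eval a := by
  rw [binaryFormEval, eval_eq_sum_range' (Nat.lt_succ_of_le hQ)]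
  exact Fin.sum_univ_eq_sum_range (fun i => Q.coeff i * a ^ i) _

def binaryFormEvalOn [Semiring K] (s : Finset (Option K)) : (Fin (d + 1) → K) →+ (s → K) where
  toFun c P := binaryFormEval c P
  map_zero' := by ext ⟨_ | _, _⟩ <;> simp [binaryFormEval]
  map_add' c c' := by ext P; exact binaryFormEval_add c c' P

variable [Field K]

theorem exists_binaryFormEval_eq_on (s : Finset (Option K)) (hs : #s ≤ d + 1)
    (t : Option K → K) : ∃ c : Fin (d + 1) → K, ∀ P ∈ s, binaryFormEval c P = t P := by
  classical
  suffices ∃ Q : K[X], Q.natDegree ≤ d ∧ (∀ a ∈ s.eraseNone, Q.eval a = t (some a)) ∧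
      (none ∈ s → Q.coeff d = t none) by
    obtain ⟨Q, hQd, hQaff, hQinf⟩ := this
    refine ⟨fun i => Q.coeff i, ?_⟩
    rintro (_ | a) hP
    · exact hQinf hP
    · rw [binaryFormEval_coeff_some hQd]
      exact hQaff a (mem_eraseNone.2 hP)
  have hinj : Set.InjOn id (s.eraseNone : Set K) := Set.injOn_id _
  by_cases hnone : none ∈ s
  · -- at most `d` affine nodes: interpolate below degree `d`, then add the prescribed `xᵈ` term
    set g : K → K := fun a => t (some a) - t none * a ^ d
    set L := Lagrange.interpolate s.eraseNone id g
    have hL : L.degree < d := (Lagrange.degree_interpolate_lt g hinj).trans_le <| by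
      rw [card_eraseNone_of_mem hnone]; exact_mod_cast (by omega)
    refine ⟨L + C (t none) * X ^ d, ?_, fun a ha => ?_, fun _ => ?_⟩
    · refine natDegree_add_le_of_degree_le ?_ (natDegree_C_mul_X_pow_le _ _)
      exact natDegree_le_iff_degree_le.2 hL.le
    · have hLa : L.eval a = g a := Lagrange.eval_interpolate_at_node g hinj ha
      simp [hLa, g]
    · simp [coeff_eq_zero_of_degree_lt hL]
  · set L := Lagrange.interpolate s.eraseNone id (t ∘ some)
    refine ⟨L, ?_, fun a ha => Lagrange.eval_interpolate_at_node _ hinj ha,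
      fun h => absurd h hnone⟩
    have hL : L.degree < ↑(d + 1) := (Lagrange.degree_interpolate_lt _ hinj).trans_le <| by
      rw [card_eraseNone_of_not_mem hnone]; exact_mod_cast hs
    exact natDegree_le_iff_degree_le.2 (Order.le_of_lt_succ hL)

theorem binaryFormEvalOn_surjective (s : Finset (Option K)) (hs : #s ≤ d + 1) :
    Function.Surjective (binaryFormEvalOn (d := d) s) := fun t => by
  classical
  obtain ⟨c, hc⟩ := exists_binaryFormEval_eq_on s hs (fun P => if h : P ∈ s then t ⟨P, h⟩ else 0)
  exact ⟨c, funext fun P => (hc P P.2).trans (dif_pos P.2)⟩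

variable [Fintype K] [DecidableEq K]

theorem card_filter_forall_binaryFormEval_notMem_mul (S : Finset K) (s : Finset (Option K))
    (hs : #s ≤ d + 1) :
    #{c : Fin (d + 1) → K | ∀ P ∈ s, binaryFormEval c P ∉ S} * Fintype.card K ^ #s =
      (Fintype.card K - #S) ^ #s * Fintype.card K ^ (d + 1) := by
  have key := (binaryFormEvalOn s).card_filter_apply_mem_mul_card
    (binaryFormEvalOn_surjective s hs) (Fintype.piFinset fun _ => Sᶜ)
  have hfilter : ({c | binaryFormEvalOn s c ∈ Fintype.piFinset fun _ => Sᶜ} :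
      Finset (Fin (d + 1) → K)) = ({c | ∀ P ∈ s, binaryFormEval c P ∉ S} : Finset _) := by
    ext c
    simp [Fintype.mem_piFinset, binaryFormEvalOn]
  rw [hfilter] at key
  simpa [Fintype.card_piFinset, card_compl] using key

theorem card_filter_exists_binaryFormEval_mem_div (S : Finset K) (s : Finset (Option K))
    (hs : #s ≤ d + 1) :
    (#{c : Fin (d + 1) → K | ∃ P ∈ s, binaryFormEval c P ∈ S} : ℝ) / Fintype.card K ^ (d + 1) =
      1 - (1 - #S / Fintype.card K) ^ #s := by
  have hsplit := card_filter_add_card_filter_not (s := (univ : Finset (Fin (d + 1) → K)))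
    (fun c => ∃ P ∈ s, binaryFormEval c P ∈ S)
  simp only [not_exists, not_and, card_univ, Fintype.card_fun, Fintype.card_fin] at hsplit
  have hbad := card_filter_forall_binaryFormEval_notMem_mul S s hs
  have hq : (0 : ℝ) < Fintype.card K := by exact_mod_cast Fintype.card_pos
  rw [← Nat.cast_inj (R := ℝ)] at hsplit hbad
  push_cast [Nat.cast_sub (card_le_univ S)] at hsplit hbad
  rw [eq_sub_iff_add_eq, one_sub_div hq.ne', div_pow,
    div_add_div _ _ (by positivity) (by positivity), div_eq_one_iff_eq (by positivity)]
  linear_combination (Fintype.card K : ℝ) ^ #s * hsplit - hbad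

end BinaryForm

theorem lower_bound_matrix_method_general (p m d : ℕ) [Fact p.Prime] :
    (1 : ℝ) -
      (1 - (Nat.card {y : ZMod p // y ≠ 0 ∧ ∃ x : ZMod p, x ^ m = y} : ℝ) / p)
        ^ (min (p + 1) (d + 1)) ≤
    (Nat.card {c : Fin (d + 1) → ZMod p //
        (∃ a : ZMod p, (∑ i : Fin (d + 1), c i * a ^ (i : ℕ)) ≠ 0 ∧
            ∃ x : ZMod p, x ^ m = ∑ i : Fin (d + 1), c i * a ^ (i : ℕ)) ∨
          (c (Fin.last d) ≠ 0 ∧ ∃ x : ZMod p, x ^ m = c (Fin.last d))} : ℝ) /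
      p ^ (d + 1) := by
  classical
  set S : Finset (ZMod p) := {y | y ≠ 0 ∧ ∃ x : ZMod p, x ^ m = y}
  obtain ⟨s, -, hs⟩ := exists_subset_card_eq (s := (univ : Finset (Option (ZMod p))))
    (n := min (p + 1) (d + 1)) (by simp)
  have hvalues (c : Fin (d + 1) → ZMod p) :
      ((∃ a : ZMod p, (∑ i : Fin (d + 1), c i * a ^ (i : ℕ)) ≠ 0 ∧
            ∃ x : ZMod p, x ^ m = ∑ i : Fin (d + 1), c i * a ^ (i : ℕ)) ∨
          (c (Fin.last d) ≠ 0 ∧ ∃ x : ZMod p, x ^ m = c (Fin.last d))) ↔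
        ∃ P, binaryFormEval c P ∈ S := by
    simp [S, Option.exists, binaryFormEval, or_comm]
  simp only [Nat.card_eq_fintype_card, Fintype.card_subtype, hvalues]
  calc (1 : ℝ) - (1 - #S / p) ^ min (p + 1) (d + 1)
      = #{c : Fin (d + 1) → ZMod p | ∃ P ∈ s, binaryFormEval c P ∈ S} / p ^ (d + 1) := by
        have h := card_filter_exists_binaryFormEval_mem_div S s (hs ▸ min_le_right _ _)
        rw [ZMod.card] at h
        rw [← hs, h]
    _ ≤ #{c : Fin (d + 1) → ZMod p | ∃ P, binaryFormEval c P ∈ S} / p ^ (d + 1) := by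
        gcongr with c P
        exact And.right

/-- The proportion of coefficient vectors `(c₀,…,c_d) ∈ F_p^{d+1}` whose binary form
`f(x,z) = Σ cᵢ xⁱ z^{d−i}` takes a nonzero `m`-th power value at some point of `P¹(F_p)`
is at least `1 − (1 − Φ(p))^r`, where `Φ(p)` is the proportion of nonzero `m`-th powers in
`F_p` and `r = min(p+1, d+1)`. -/
theorem lower_bound_matrix_method (p m d : ℕ) [Fact p.Prime] (hm : 2 ≤ m) (hpm : ¬ p ∣ m)
    (hd : 1 ≤ d) :
    (1 : ℝ) -
      (1 - (Nat.card {y : ZMod p // y ≠ 0 ∧ ∃ x : ZMod p, x ^ m = y} : ℝ) / p)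
        ^ (min (p + 1) (d + 1)) ≤
    (Nat.card {c : Fin (d + 1) → ZMod p //
        (∃ a : ZMod p, (∑ i : Fin (d + 1), c i * a ^ (i : ℕ)) ≠ 0 ∧
            ∃ x : ZMod p, x ^ m = ∑ i : Fin (d + 1), c i * a ^ (i : ℕ)) ∨
          (c (Fin.last d) ≠ 0 ∧ ∃ x : ZMod p, x ^ m = c (Fin.last d))} : ℝ) /
      p ^ (d + 1) :=
  lower_bound_matrix_method_general p m d
end
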